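/- arXiv:2405.11900 — 2 statements merged into one kernel-verified Lean document; each statement's English description precedes it below -/
import Mathlib

section
/- Pointwise equivalence between the generalized specific energy and a power of the pressure deviation: let ρ* > 0 and l ≥ 1. There exist constants 0 < c ≤ C, depending only on P, ρ̃, ρ* and l, such that for all s ∈ [0,ρ*]: c·|P(s) − P̃|^{l+1} ≤ H_l(s) ≤ C·|P(s) − P̃|^{l+1}. In particular H_l(s) ≥ 0 for all s ∈ [0,ρ*]. -/
noncomputable section
open MeasureTheory

/-- The generalized specific energy `H_l`:
`H_l(s) = s ∫_ρ̃^s r⁻²|P(r)−P̃|^(l−1)(P(r)−P̃) dr` for `s ≠ 0`, continuously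
extended by `H_l(0) = |P(0)−P̃|^l`. -/
def Hl (P : ℝ → ℝ) (ρt l s : ℝ) : ℝ :=
  if s = 0 then |P 0 - P ρt| ^ l
  else s * ∫ r in ρt..s, |P r - P ρt| ^ (l - 1) * (P r - P ρt) / r ^ 2

/-!
Since `P` is increasing, the integrand of `H_l(s)` has the sign of `s - ρ̃` between `ρ̃` and `s`,
so `H_l(s) = s ∫ |P(r) - P̃|^l / r² dr` over that interval. Bounding `|P(r) - P̃|^l` above by its
value at `s`, and below, on the half of the interval next to `s`, by its value at the midpoint,
`s ∫_x^y r⁻² dr = s (x⁻¹ - y⁻¹)` gives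
`|P((s+ρ̃)/2) - P̃|^l |s-ρ̃|/(s+ρ̃) ≤ H_l(s) ≤ |P(s) - P̃|^l |s-ρ̃|/ρ̃`, also at `s = 0`.
On a compact interval `P'` lies between two positive constants, so both `|P(s) - P̃|` and
`|P((s+ρ̃)/2) - P̃|` are comparable to `|s - ρ̃|`.
-/

open Set

lemma abs_rpow_sub_one_mul_abs {l : ℝ} (hl : 0 < l) (x : ℝ) :
    |x| ^ (l - 1) * |x| = |x| ^ l := by
  rw [← Real.rpow_add_one' (abs_nonneg x) (by rw [sub_add_cancel]; exact hl.ne'), sub_add_cancel]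

lemma integral_const_div_sq {x y : ℝ} (hx : 0 < x) (hy : 0 < y) (K : ℝ) :
    ∫ r in x..y, K / r ^ 2 = K * (x⁻¹ - y⁻¹) := by
  have hderiv : ∀ r ∈ uIcc x y, HasDerivAt (fun r => -K * r⁻¹) (K / r ^ 2) r := by
    intro r hr
    have hr : r ≠ 0 := ((lt_min hx hy).trans_le hr.1).ne'
    exact ((hasDerivAt_inv hr).const_mul (-K)).congr_deriv (by ring)
  rw [intervalIntegral.integral_eq_sub_of_hasDerivAt hderiv]
  · ring
  · exact (continuousOn_const.div (continuousOn_pow 2) fun r hr =>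
      pow_ne_zero 2 ((lt_min hx hy).trans_le hr.1).ne').intervalIntegrable

lemma ContinuousOn.intervalIntegrable_div_sq {h : ℝ → ℝ} {x y : ℝ} (hx : 0 < x) (hxy : x ≤ y)
    (hh : ContinuousOn h (Icc x y)) : IntervalIntegrable (fun r => h r / r ^ 2) volume x y := by
  refine ContinuousOn.intervalIntegrable ?_
  rw [uIcc_of_le hxy]
  exact hh.div (continuousOn_pow 2) fun r hr => pow_ne_zero 2 (hx.trans_le hr.1).ne'

lemma integral_div_sq_le {h : ℝ → ℝ} {x y K : ℝ} (hx : 0 < x) (hxy : x ≤ y)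
    (hh : ContinuousOn h (Icc x y)) (hK : ∀ r ∈ Icc x y, h r ≤ K) :
    ∫ r in x..y, h r / r ^ 2 ≤ K * (x⁻¹ - y⁻¹) := by
  rw [← integral_const_div_sq hx (hx.trans_le hxy)]
  exact intervalIntegral.integral_mono_on hxy (hh.intervalIntegrable_div_sq hx hxy)
    (continuousOn_const.intervalIntegrable_div_sq hx hxy) fun r hr =>
      div_le_div_of_nonneg_right (hK r hr) (sq_nonneg r)

lemma le_integral_div_sq {h : ℝ → ℝ} {x y K : ℝ} (hx : 0 < x) (hxy : x ≤ y)
    (hh : ContinuousOn h (Icc x y)) (hK : ∀ r ∈ Icc x y, K ≤ h r) :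
    K * (x⁻¹ - y⁻¹) ≤ ∫ r in x..y, h r / r ^ 2 := by
  rw [← integral_const_div_sq hx (hx.trans_le hxy)]
  exact intervalIntegral.integral_mono_on hxy
    (continuousOn_const.intervalIntegrable_div_sq hx hxy) (hh.intervalIntegrable_div_sq hx hxy)
    fun r hr => div_le_div_of_nonneg_right (hK r hr) (sq_nonneg r)

lemma integral_div_sq_mono_interval {h : ℝ → ℝ} {x u v y : ℝ} (hx : 0 < x) (hxu : x ≤ u)
    (huv : u ≤ v) (hvy : v ≤ y) (hh : ContinuousOn h (Icc x y)) (h0 : ∀ r ∈ Icc x y, 0 ≤ h r) :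
    ∫ r in u..v, h r / r ^ 2 ≤ ∫ r in x..y, h r / r ^ 2 :=
  intervalIntegral.integral_mono_interval hxu huv hvy
    ((ae_restrict_iff' measurableSet_Ioc).2 <| Filter.Eventually.of_forall fun r hr =>
      div_nonneg (h0 r (Ioc_subset_Icc_self hr)) (sq_nonneg r))
    (hh.intervalIntegrable_div_sq hx (hxu.trans (huv.trans hvy)))

lemma MonotoneOn.abs_sub_le_of_mem_uIcc {f : ℝ → ℝ} {S : Set ℝ} (hf : MonotoneOn f S)
    (hS : S.OrdConnected) {a b c : ℝ} (ha : a ∈ S) (hb : b ∈ S) (hc : c ∈ uIcc a b) :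
    |f c - f a| ≤ |f b - f a| :=
  abs_sub_left_of_mem_uIcc ((hf.mono (hS.uIcc_subset ha hb)).mapsTo_uIcc hc)

section Hl

variable {P : ℝ → ℝ} {a l s : ℝ}

lemma rpow_abs_sub_le_of_mem_uIcc (hmono : MonotoneOn P (Ici 0)) (hl : 0 ≤ l) {b c : ℝ}
    (ha : 0 ≤ a) (hb : 0 ≤ b) (hc : c ∈ uIcc a b) :
    |P c - P a| ^ l ≤ |P b - P a| ^ l :=
  Real.rpow_le_rpow (abs_nonneg _) (hmono.abs_sub_le_of_mem_uIcc ordConnected_Ici ha hb hc) hl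

lemma Hl_eq_of_le (hmono : MonotoneOn P (Ici 0)) (ha : 0 < a) (hl : 0 < l) (has : a ≤ s) :
    Hl P a l s = s * ∫ r in a..s, |P r - P a| ^ l / r ^ 2 := by
  rw [Hl, if_neg (ha.trans_le has).ne']
  congr 1
  refine intervalIntegral.integral_congr fun r hr => ?_
  rw [uIcc_of_le has] at hr
  have hPr : 0 ≤ P r - P a := sub_nonneg.2 (hmono ha.le (ha.le.trans hr.1) hr.1)
  rw [← abs_rpow_sub_one_mul_abs hl, abs_of_nonneg hPr]

lemma Hl_eq_of_ge (hmono : MonotoneOn P (Ici 0)) (hl : 0 < l) (hs : 0 < s) (hsa : s ≤ a) :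
    Hl P a l s = s * ∫ r in s..a, |P r - P a| ^ l / r ^ 2 := by
  rw [Hl, if_neg hs.ne', intervalIntegral.integral_symm, ← intervalIntegral.integral_neg]
  congr 1
  refine intervalIntegral.integral_congr fun r hr => ?_
  rw [uIcc_of_le hsa] at hr
  have hPr : P r - P a ≤ 0 := sub_nonpos.2 (hmono (hs.le.trans hr.1) (hs.le.trans hsa) hr.2)
  rw [← abs_rpow_sub_one_mul_abs hl, abs_of_nonpos hPr]
  ring

lemma continuous_rpow_abs_sub (hPc : Continuous P) (hl : 0 ≤ l) :
    Continuous fun r => |P r - P a| ^ l :=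
  ((hPc.sub continuous_const).abs).rpow_const fun _ => Or.inr hl

lemma Hl_bounds_of_le (hPc : Continuous P) (hmono : MonotoneOn P (Ici 0)) (ha : 0 < a)
    (hl : 0 < l) (has : a ≤ s) :
    |P ((s + a) / 2) - P a| ^ l * ((s - a) / (s + a)) ≤ Hl P a l s ∧
      Hl P a l s ≤ |P s - P a| ^ l * ((s - a) / a) := by
  have hs : 0 < s := ha.trans_le has
  have hw := (continuous_rpow_abs_sub (a := a) hPc hl.le).continuousOn (s := Icc a s)
  have hw_le : ∀ {b c}, 0 ≤ b → c ∈ uIcc a b → |P c - P a| ^ l ≤ |P b - P a| ^ l :=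
    fun hb hc => rpow_abs_sub_le_of_mem_uIcc hmono hl.le ha.le hb hc
  set mid := (s + a) / 2 with hmid
  have hamid : a ≤ mid := by linarith
  have hmids : mid ≤ s := by linarith
  rw [Hl_eq_of_le hmono ha hl has]
  constructor
  · calc |P mid - P a| ^ l * ((s - a) / (s + a))
        = s * (|P mid - P a| ^ l * (mid⁻¹ - s⁻¹)) := by rw [hmid]; field_simp; ring
      _ ≤ s * ∫ r in mid..s, |P r - P a| ^ l / r ^ 2 := by
        gcongr
        exact le_integral_div_sq (ha.trans_le hamid) hmids (hw.mono (Icc_subset_Icc_left hamid))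
          fun r hr => hw_le (ha.le.trans (hamid.trans hr.1)) (Icc_subset_uIcc ⟨hamid, hr.1⟩)
      _ ≤ s * ∫ r in a..s, |P r - P a| ^ l / r ^ 2 := by
        gcongr
        exact integral_div_sq_mono_interval ha hamid hmids le_rfl hw fun r _ => by positivity
  · calc s * ∫ r in a..s, |P r - P a| ^ l / r ^ 2
        ≤ s * (|P s - P a| ^ l * (a⁻¹ - s⁻¹)) := by
          gcongr
          exact integral_div_sq_le ha has hw fun r hr => hw_le hs.le (Icc_subset_uIcc hr)
      _ = |P s - P a| ^ l * ((s - a) / a) := by field_simp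

lemma Hl_bounds_of_ge (hPc : Continuous P) (hmono : MonotoneOn P (Ici 0)) (hl : 0 < l)
    (hs : 0 < s) (hsa : s ≤ a) :
    |P ((s + a) / 2) - P a| ^ l * ((a - s) / (s + a)) ≤ Hl P a l s ∧
      Hl P a l s ≤ |P s - P a| ^ l * ((a - s) / a) := by
  have ha : 0 < a := hs.trans_le hsa
  have hw := (continuous_rpow_abs_sub (a := a) hPc hl.le).continuousOn (s := Icc s a)
  have hw_le : ∀ {b c}, 0 ≤ b → c ∈ uIcc a b → |P c - P a| ^ l ≤ |P b - P a| ^ l :=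
    fun hb hc => rpow_abs_sub_le_of_mem_uIcc hmono hl.le ha.le hb hc
  set mid := (s + a) / 2 with hmid
  have hsmid : s ≤ mid := by linarith
  have hmida : mid ≤ a := by linarith
  rw [Hl_eq_of_ge hmono hl hs hsa]
  constructor
  · calc |P mid - P a| ^ l * ((a - s) / (s + a))
        = s * (|P mid - P a| ^ l * (s⁻¹ - mid⁻¹)) := by rw [hmid]; field_simp; ring
      _ ≤ s * ∫ r in s..mid, |P r - P a| ^ l / r ^ 2 := by
        gcongr
        exact le_integral_div_sq hs hsmid (hw.mono (Icc_subset_Icc_right hmida))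
          fun r hr => hw_le (hs.le.trans hr.1) (Icc_subset_uIcc' ⟨hr.2, hmida⟩)
      _ ≤ s * ∫ r in s..a, |P r - P a| ^ l / r ^ 2 := by
        gcongr
        exact integral_div_sq_mono_interval hs le_rfl hsmid hmida hw fun r _ => by positivity
  · calc s * ∫ r in s..a, |P r - P a| ^ l / r ^ 2
        ≤ s * (|P s - P a| ^ l * (s⁻¹ - a⁻¹)) := by
          gcongr
          exact integral_div_sq_le hs hsa hw fun r hr => hw_le hs.le (Icc_subset_uIcc' hr)
      _ = |P s - P a| ^ l * ((a - s) / a) := by field_simp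

lemma Hl_bounds (hPc : Continuous P) (hmono : MonotoneOn P (Ici 0)) (ha : 0 < a) (hl : 0 < l)
    (hs : 0 ≤ s) :
    |P ((s + a) / 2) - P a| ^ l * (|s - a| / (s + a)) ≤ Hl P a l s ∧
      Hl P a l s ≤ |P s - P a| ^ l * (|s - a| / a) := by
  rcases hs.eq_or_lt with rfl | hs
  · have hmid : a / 2 ∈ uIcc a 0 := by rw [uIcc_of_ge ha.le]; constructor <;> linarith
    rw [zero_sub, abs_neg, abs_of_pos ha, zero_add, div_self ha.ne', mul_one, mul_one, Hl,
      if_pos rfl]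
    exact ⟨rpow_abs_sub_le_of_mem_uIcc hmono hl.le ha.le le_rfl hmid, le_rfl⟩
  rcases le_total a s with has | hsa
  · rw [abs_of_nonneg (sub_nonneg.2 has)]
    exact Hl_bounds_of_le hPc hmono ha hl has
  · rw [abs_of_nonpos (sub_nonpos.2 hsa), neg_sub]
    exact Hl_bounds_of_ge hPc hmono hl hs hsa

lemma Hl_bounds_of_biLipschitz (hPc : Continuous P) (hmono : MonotoneOn P (Ici 0)) (ha : 0 < a)
    (hl : 0 < l) {R m M : ℝ} (haR : a ≤ R) (hm : 0 < m) (hM : 0 < M)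
    (hlip : ∀ x ∈ Icc 0 R, ∀ y ∈ Icc 0 R, m * |x - y| ≤ |P x - P y| ∧ |P x - P y| ≤ M * |x - y|)
    (hs : s ∈ Icc 0 R) :
    (m / 2) ^ l / (2 * R * M ^ (l + 1)) * |P s - P a| ^ (l + 1) ≤ Hl P a l s ∧
      Hl P a l s ≤ (m * a)⁻¹ * |P s - P a| ^ (l + 1) := by
  obtain ⟨hlow, hup⟩ := Hl_bounds hPc hmono ha hl hs.1
  have haI : a ∈ Icc 0 R := ⟨ha.le, haR⟩
  have hmidI : (s + a) / 2 ∈ Icc 0 R := ⟨by linarith [hs.1], by linarith [hs.2]⟩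
  have hR : 0 < R := ha.trans_le haR
  set d := |P s - P a|
  set e := |s - a|
  have hd : 0 ≤ d := abs_nonneg _
  have he : 0 ≤ e := abs_nonneg _
  obtain ⟨hmd, hdM⟩ := hlip s hs a haI
  have hmid : m * e / 2 ≤ |P ((s + a) / 2) - P a| := by
    have hhalf : |(s + a) / 2 - a| = e / 2 := by
      rw [show (s + a) / 2 - a = (s - a) / 2 by ring, abs_div, abs_two]
    linarith [hhalf ▸ (hlip _ hmidI a haI).1]
  constructor
  · calc (m / 2) ^ l / (2 * R * M ^ (l + 1)) * d ^ (l + 1)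
        ≤ (m / 2) ^ l / (2 * R * M ^ (l + 1)) * (M * e) ^ (l + 1) := by gcongr
      _ = (m * e / 2) ^ l * (e / (2 * R)) := by
        rw [Real.mul_rpow hM.le he, Real.rpow_add_one' he (by linarith),
          show m * e / 2 = m / 2 * e by ring, Real.mul_rpow (by positivity) he]
        field_simp
      _ ≤ |P ((s + a) / 2) - P a| ^ l * (e / (s + a)) := by
        gcongr
        · linarith [hs.1]
        · linarith [hs.2]
      _ ≤ Hl P a l s := hlow
  · calc Hl P a l s ≤ d ^ l * (e / a) := hup
      _ ≤ d ^ l * (d / m / a) := by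
        gcongr
        rw [le_div_iff₀ hm]
        linarith
      _ = (m * a)⁻¹ * d ^ (l + 1) := by
        rw [Real.rpow_add_one' hd (by linarith)]
        field_simp

end Hl

lemma exists_pos_mul_abs_sub_le_abs_sub_le_mul {f : ℝ → ℝ} (hf : ContDiff ℝ 1 f) {a b : ℝ}
    (hab : a ≤ b) (hpos : ∀ x ∈ Icc a b, 0 < deriv f x) :
    ∃ m M : ℝ, 0 < m ∧ 0 < M ∧ ∀ x ∈ Icc a b, ∀ y ∈ Icc a b,
      m * |x - y| ≤ |f x - f y| ∧ |f x - f y| ≤ M * |x - y| := by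
  have hf' := (hf.continuous_deriv le_rfl).continuousOn (s := Icc a b)
  obtain ⟨xm, hxm, hmin⟩ := isCompact_Icc.exists_isMinOn (nonempty_Icc.2 hab) hf'
  obtain ⟨xM, hxM, hmax⟩ := isCompact_Icc.exists_isMaxOn (nonempty_Icc.2 hab) hf'
  have hfc := hf.continuous.continuousOn (s := Icc a b)
  have hfd := (hf.differentiable one_ne_zero).differentiableOn (s := interior (Icc a b))
  have hlow := (convex_Icc a b).mul_sub_le_image_sub_of_le_deriv hfc hfd
    fun x hx => hmin (interior_subset hx)
  have hup := (convex_Icc a b).image_sub_le_mul_sub_of_deriv_le hfc hfd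
    fun x hx => hmax (interior_subset hx)
  refine ⟨deriv f xm, deriv f xM, hpos xm hxm, hpos xM hxM, fun x hx y hy => ?_⟩
  wlog hxy : y ≤ x generalizing x y
  · rw [abs_sub_comm x, abs_sub_comm (f x)]
    exact this y hy x hx (le_of_not_ge hxy)
  have hm := hlow y hy x hx hxy
  rw [abs_of_nonneg (sub_nonneg.2 hxy),
    abs_of_nonneg (hm.trans' (mul_nonneg (hpos xm hxm).le (sub_nonneg.2 hxy)))]
  exact ⟨hm, hup y hy x hx hxy⟩

theorem Hl_equiv_pressure_deviation_general
    (P : ℝ → ℝ) (ρt : ℝ) (hP : ContDiff ℝ 2 P)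
    (hP' : ∀ s ≥ (0:ℝ), 0 < deriv P s) (hρt : 0 < ρt)
    (ρstar l : ℝ) (hl : 1 ≤ l) :
    ∃ c C : ℝ, 0 < c ∧ c ≤ C ∧
      ∀ s ∈ Set.Icc (0:ℝ) ρstar,
        c * |P s - P ρt| ^ (l + 1) ≤ Hl P ρt l s ∧
        Hl P ρt l s ≤ C * |P s - P ρt| ^ (l + 1) ∧
        0 ≤ Hl P ρt l s := by
  set R := max ρstar ρt
  have hρtR : ρt ≤ R := le_max_right _ _
  have hR : 0 < R := hρt.trans_le hρtR
  have hmono : MonotoneOn P (Ici 0) := (strictMonoOn_of_deriv_pos (convex_Ici 0)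
    hP.continuous.continuousOn fun x hx => hP' x (interior_subset hx)).monotoneOn
  obtain ⟨m, M, hm, hM, hlip⟩ :=
    exists_pos_mul_abs_sub_le_abs_sub_le_mul (hP.of_le one_le_two) hR.le fun x hx => hP' x hx.1
  set c := (m / 2) ^ l / (2 * R * M ^ (l + 1))
  refine ⟨c, max (m * ρt)⁻¹ c, by positivity, le_max_right _ _, fun s hs => ?_⟩
  obtain ⟨hlow, hup⟩ := Hl_bounds_of_biLipschitz hP.continuous hmono hρt (by linarith : 0 < l)
    hρtR hm hM hlip ⟨hs.1, hs.2.trans (le_max_left _ _)⟩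
  exact ⟨hlow, hup.trans (by gcongr; exact le_max_left _ _), hlow.trans' (by positivity)⟩

/-- Pointwise equivalence between the generalized specific
energy `H_l` and `|P − P̃|^(l+1)` on `[0, ρ*]`. -/
theorem Hl_equiv_pressure_deviation
    (P : ℝ → ℝ) (ρt : ℝ) (hP : ContDiff ℝ 2 P)
    (hP' : ∀ s ≥ (0:ℝ), 0 < deriv P s) (hρt : 0 < ρt)
    (ρstar l : ℝ) (hρstar : 0 < ρstar) (hl : 1 ≤ l) :
    ∃ c C : ℝ, 0 < c ∧ c ≤ C ∧
      ∀ s ∈ Set.Icc (0:ℝ) ρstar,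
        c * |P s - P ρt| ^ (l + 1) ≤ Hl P ρt l s ∧
        Hl P ρt l s ≤ C * |P s - P ρt| ^ (l + 1) ∧
        0 ≤ Hl P ρt l s :=
  Hl_equiv_pressure_deviation_general P ρt hP hP' hρt ρstar l hl
end
end

section
/- L^q control of the pressure deviation by the potential energy (estimate (2.2) of the paper): let ρ* > 0, d ≥ 1 a natural number, and 2 ≤ q < ∞. There exists a constant C > 0 depending only on P, ρ̃, ρ* and q such that for every measurable function ρ : ℝ^d → ℝ with 0 ≤ ρ(x) ≤ ρ* for almost every x, one has ∫_{ℝ^d} |P(ρ(x)) − P̃|^q dx ≤ C·∫_{ℝ^d} H₁(ρ(x)) dx, as an inequality in [0,∞]. -/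
/-! On `[0, M]`, `M = max ρ* ρ̃`, we have `P' ≥ m > 0`, so with `c = m / 2M` the function
`N r = P r - P̃ - c (r² - ρ̃²)` is increasing and vanishes at `ρ̃`. Hence the oriented integral
`∫_ρ̃^s N r / r² dr` is nonnegative, and as `∫_ρ̃^s (1 - ρ̃² / r²) dr = (s - ρ̃)² / s` this gives
`H₁(s) ≥ c (s - ρ̃)²`, also at `s = 0`. On the other side `P` is `L`-Lipschitz on `[0, M]`, so
`|P(s) - P̃|^q ≤ (L M)^(q-2) L² (s - ρ̃)²`. -/

noncomputable section
open MeasureTheory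

open Set intervalIntegral

lemma rpow_le_rpow_sub_two_mul_sq {x B q : ℝ} (hx : 0 ≤ x) (hxB : x ≤ B) (hq : 2 ≤ q) :
    x ^ q ≤ B ^ (q - 2) * x ^ 2 := by
  have hpow : x ^ q = x ^ (q - 2) * x ^ 2 := by
    rw [← Real.rpow_natCast, ← Real.rpow_add' hx (by norm_num; linarith)]
    norm_num
  rw [hpow]
  gcongr

lemma integral_one_sub_sq_div_sq {a b : ℝ} (ha : 0 < a) (hb : 0 < b) :
    ∫ r in a..b, (1 - a ^ 2 / r ^ 2) = (b - a) ^ 2 / b := by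
  have hpos : ∀ r ∈ uIcc a b, r ≠ 0 := fun r hr =>
    (lt_of_lt_of_le (lt_inf_iff.2 ⟨ha, hb⟩) hr.1).ne'
  have hderiv : ∀ r ∈ uIcc a b,
      HasDerivAt (fun r => (r - a) ^ 2 / r) (1 - a ^ 2 / r ^ 2) r := by
    intro r hr
    refine ((((hasDerivAt_id' r).sub_const a).pow 2).div (hasDerivAt_id' r)
      (hpos r hr)).congr_deriv ?_
    have hr0 := hpos r hr
    simp only [Pi.pow_apply]
    field_simp
    ring
  have hcont : ContinuousOn (fun r : ℝ => 1 - a ^ 2 / r ^ 2) (uIcc a b) :=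
    continuousOn_const.sub (continuousOn_const.div (by fun_prop)
      fun r hr => pow_ne_zero 2 (hpos r hr))
  rw [integral_eq_sub_of_hasDerivAt hderiv hcont.intervalIntegrable]
  simp

lemma integral_mul_nonneg_of_monotoneOn {N w : ℝ → ℝ} {a b : ℝ}
    (hN : MonotoneOn N (uIcc a b)) (hNa : N a = 0) (hw : ∀ r ∈ uIcc a b, 0 ≤ w r) :
    0 ≤ ∫ r in a..b, N r * w r := by
  rcases le_total a b with hab | hba
  · refine integral_nonneg hab fun r hr => mul_nonneg ?_ (hw r (Icc_subset_uIcc hr))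
    exact hNa ▸ hN left_mem_uIcc (Icc_subset_uIcc hr) hr.1
  · rw [intervalIntegral.integral_symm, ← intervalIntegral.integral_neg]
    refine integral_nonneg hba fun r hr => ?_
    have hNr : N r ≤ 0 := hNa ▸ hN (Icc_subset_uIcc' hr) left_mem_uIcc hr.2
    exact neg_nonneg.2 (mul_nonpos_of_nonpos_of_nonneg hNr (hw r (Icc_subset_uIcc' hr)))

lemma monotoneOn_sub_mul_sq {P : ℝ → ℝ} {D : Set ℝ} {c : ℝ} (hD : Convex ℝ D)
    (hP : Differentiable ℝ P) (hderiv : ∀ x ∈ interior D, 2 * c * x ≤ deriv P x) :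
    MonotoneOn (fun r => P r - c * r ^ 2) D := by
  refine monotoneOn_of_deriv_nonneg hD (hP.continuous.sub (by fun_prop)).continuousOn
    (by fun_prop) fun x hx => ?_
  have hd : HasDerivAt (fun r => P r - c * r ^ 2) (deriv P x - 2 * c * x) x :=
    (hP x).hasDerivAt.sub ((hasDerivAt_pow 2 x).const_mul c) |>.congr_deriv (by ring)
  rw [hd.deriv]
  linarith [hderiv x hx]

lemma Hl_one_zero (P : ℝ → ℝ) (ρt : ℝ) : Hl P ρt 1 0 = |P 0 - P ρt| := by
  simp [Hl]

lemma Hl_one_of_ne_zero (P : ℝ → ℝ) {ρt s : ℝ} (hs : s ≠ 0) :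
    Hl P ρt 1 s = s * ∫ r in ρt..s, (P r - P ρt) / r ^ 2 := by
  simp [Hl, hs]

lemma mul_sq_sub_le_Hl_one {P : ℝ → ℝ} {ρt c M s : ℝ} (hP : Continuous P) (hρt : 0 < ρt)
    (hρtM : ρt ≤ M) (hmono : MonotoneOn (fun r => P r - c * r ^ 2) (Icc 0 M))
    (hs : s ∈ Icc 0 M) : c * (s - ρt) ^ 2 ≤ Hl P ρt 1 s := by
  have hρtI : ρt ∈ Icc 0 M := ⟨hρt.le, hρtM⟩
  rcases hs.1.eq_or_lt with rfl | hs0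
  · have h0 := hmono hs hρtI hρt.le
    rw [Hl_one_zero, abs_sub_comm]
    simp only at h0
    linarith [le_abs_self (P ρt - P 0)]
  set N : ℝ → ℝ := fun r => (P r - c * r ^ 2) - (P ρt - c * ρt ^ 2)
  have hsub : uIcc ρt s ⊆ Icc 0 M := uIcc_subset_Icc hρtI hs
  have hpos : ∀ r ∈ uIcc ρt s, r ≠ 0 := fun r hr =>
    (lt_of_lt_of_le (lt_inf_iff.2 ⟨hρt, hs0⟩) hr.1).ne'
  have hinv : ContinuousOn (fun r : ℝ => (r ^ 2)⁻¹) (uIcc ρt s) :=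
    (continuous_pow 2).continuousOn.inv₀ fun r hr => pow_ne_zero 2 (hpos r hr)
  have hNc : Continuous N := by fun_prop
  have hsplit : ∫ r in ρt..s, (P r - P ρt) / r ^ 2
      = (∫ r in ρt..s, N r * (r ^ 2)⁻¹) + c * ∫ r in ρt..s, (1 - ρt ^ 2 / r ^ 2) := by
    have hint₁ : IntervalIntegrable (fun r => N r * (r ^ 2)⁻¹) volume ρt s :=
      (hNc.continuousOn.mul hinv).intervalIntegrable
    have hint₂ : IntervalIntegrable (fun r => c * (1 - ρt ^ 2 / r ^ 2)) volume ρt s :=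
      (continuousOn_const.mul (continuousOn_const.sub (continuousOn_const.div (by fun_prop)
        fun r hr => pow_ne_zero 2 (hpos r hr)))).intervalIntegrable
    rw [← intervalIntegral.integral_const_mul, ← intervalIntegral.integral_add hint₁ hint₂]
    refine integral_congr fun r hr => ?_
    field_simp [hpos r hr]
    ring
  have hN : 0 ≤ ∫ r in ρt..s, N r * (r ^ 2)⁻¹ :=
    integral_mul_nonneg_of_monotoneOn (fun x hx y hy hxy => sub_le_sub_right
      (hmono (hsub hx) (hsub hy) hxy) _) (sub_self _) fun r _ => by positivity
  have hcancel : s * (c * ((s - ρt) ^ 2 / s)) = c * (s - ρt) ^ 2 := by field_simp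
  rw [Hl_one_of_ne_zero P hs0.ne', hsplit, integral_one_sub_sq_div_sq hρt hs0, mul_add, hcancel]
  linarith [mul_nonneg hs0.le hN]

lemma exists_abs_sub_rpow_le_mul_Hl_one {P : ℝ → ℝ} {ρt : ℝ} (hP : ContDiff ℝ 1 P)
    (hP' : ∀ s ≥ (0:ℝ), 0 < deriv P s) (hρt : 0 < ρt) (ρstar : ℝ) {q : ℝ} (hq : 2 ≤ q) :
    ∃ C > 0, ∀ s ∈ Icc 0 ρstar, |P s - P ρt| ^ q ≤ C * Hl P ρt 1 s := by
  set M := max ρstar ρt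
  have hM : 0 < M := hρt.trans_le (le_max_right _ _)
  have hρtI : ρt ∈ Icc 0 M := ⟨hρt.le, le_max_right _ _⟩
  have hdiff : Differentiable ℝ P := hP.differentiable one_ne_zero
  have hcont : ContinuousOn (deriv P) (Icc 0 M) := (hP.continuous_deriv le_rfl).continuousOn
  obtain ⟨m, hm0, hm⟩ := isCompact_Icc.exists_forall_le' hcont fun r hr => hP' r hr.1
  obtain ⟨L, hL⟩ := isCompact_Icc.exists_bound_of_continuousOn hcont
  have hL0 : 0 < L := (norm_pos_iff.2 (hP' ρt hρt.le).ne').trans_le (hL ρt hρtI)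
  set c := m / (2 * M) with hc
  have hc0 : 0 < c := by positivity
  have hmono : MonotoneOn (fun r => P r - c * r ^ 2) (Icc 0 M) := by
    refine monotoneOn_sub_mul_sq (convex_Icc 0 M) hdiff fun r hr => ?_
    have hr := interior_subset hr
    have hcr : 2 * c * r = m * (r / M) := by rw [hc]; field_simp
    rw [hcr]
    exact (mul_le_of_le_one_right hm0.le ((div_le_one hM).2 hr.2)).trans (hm r hr)
  refine ⟨(L * M) ^ (q - 2) * L ^ 2 / c, by positivity, fun s hs => ?_⟩
  have hsI : s ∈ Icc 0 M := ⟨hs.1, hs.2.trans (le_max_left _ _)⟩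
  have hlip : |P s - P ρt| ≤ L * |s - ρt| := by
    simpa using (convex_Icc 0 M).norm_image_sub_le_of_norm_deriv_le (fun x _ => hdiff x) hL
      hρtI hsI
  have hdist : |s - ρt| ≤ M := abs_sub_le_iff.2 ⟨by linarith [hsI.2], by linarith [hρtI.2, hs.1]⟩
  calc |P s - P ρt| ^ q ≤ (L * M) ^ (q - 2) * |P s - P ρt| ^ 2 :=
        rpow_le_rpow_sub_two_mul_sq (abs_nonneg _) (hlip.trans (by gcongr)) hq
    _ ≤ (L * M) ^ (q - 2) * (L * |s - ρt|) ^ 2 := by gcongr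
    _ = (L * M) ^ (q - 2) * L ^ 2 / c * (c * (s - ρt) ^ 2) := by
        rw [mul_pow, sq_abs]
        field_simp
    _ ≤ (L * M) ^ (q - 2) * L ^ 2 / c * Hl P ρt 1 s := by
        gcongr
        exact mul_sq_sub_le_Hl_one hP.continuous hρt hρtI.2 hmono hsI

theorem pressure_deviation_Lq_le_potential_energy_general
    (P : ℝ → ℝ) (ρt : ℝ) (hP : ContDiff ℝ 2 P)
    (hP' : ∀ s ≥ (0:ℝ), 0 < deriv P s) (hρt : 0 < ρt)
    (ρstar : ℝ) (d : ℕ)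
    (q : ℝ) (hq : 2 ≤ q) :
    ∃ C > (0:ℝ), ∀ ρ : EuclideanSpace ℝ (Fin d) → ℝ,
      Measurable ρ → (∀ᵐ x, 0 ≤ ρ x ∧ ρ x ≤ ρstar) →
      ∫⁻ x, ENNReal.ofReal (|P (ρ x) - P ρt| ^ q) ≤
        ENNReal.ofReal C * ∫⁻ x, ENNReal.ofReal (Hl P ρt 1 (ρ x)) := by
  obtain ⟨C, hC, hpointwise⟩ :=
    exists_abs_sub_rpow_le_mul_Hl_one (hP.of_le (by norm_num)) hP' hρt ρstar hq
  refine ⟨C, hC, fun ρ _ hρ => ?_⟩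
  rw [← lintegral_const_mul' _ _ ENNReal.ofReal_ne_top]
  refine lintegral_mono_ae (hρ.mono fun x hx => ?_)
  rw [← ENNReal.ofReal_mul hC.le]
  exact ENNReal.ofReal_le_ofReal (hpointwise (ρ x) hx)

/-- `L^q` control of the pressure deviation by the potential
energy, as an inequality in `[0,∞]`. -/
theorem pressure_deviation_Lq_le_potential_energy
    (P : ℝ → ℝ) (ρt : ℝ) (hP : ContDiff ℝ 2 P)
    (hP' : ∀ s ≥ (0:ℝ), 0 < deriv P s) (hρt : 0 < ρt)
    (ρstar : ℝ) (hρstar : 0 < ρstar) (d : ℕ) (hd : 1 ≤ d)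
    (q : ℝ) (hq : 2 ≤ q) :
    ∃ C > (0:ℝ), ∀ ρ : EuclideanSpace ℝ (Fin d) → ℝ,
      Measurable ρ → (∀ᵐ x, 0 ≤ ρ x ∧ ρ x ≤ ρstar) →
      ∫⁻ x, ENNReal.ofReal (|P (ρ x) - P ρt| ^ q) ≤
        ENNReal.ofReal C * ∫⁻ x, ENNReal.ofReal (Hl P ρt 1 (ρ x)) :=
  pressure_deviation_Lq_le_potential_energy_general P ρt hP hP' hρt ρstar d q hq
end
end
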